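/- Let H be a symmetric positive definite real n×n matrix, let w : Fin n → ℝ, let p : Fin n, and let q ∈ ℝ be a target value (the quantized value of w p). Then among all vectors δ : Fin n → ℝ satisfying δ p = q − (w p), the quadratic form δ ⬝ᵥ (H *ᵥ δ) is minimized, with minimum value (q − w p)² / (H⁻¹) p p, and the minimum is attained at δ* := −(((w p) − q) / (H⁻¹) p p) • (fun i => (H⁻¹) i p). In particular, when q = 0 this recovers the OBS pruning formula. -/

import Mathlib

/-!
The column `u = H⁻¹ eₚ` solves `H u = eₚ`, so it represents the functional `δ ↦ δ p` for the
form `⟪x, y⟫_H = xᵀ H y`, and `⟪u, u⟫_H = u p = H⁻¹ p p`. Completing the square,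
`0 ≤ ⟪δ - c u, δ - c u⟫_H = ⟪δ, δ⟫_H - (δ p)² / u p` for `c = δ p / u p` (Cauchy–Schwarz),
with equality at `δ = c u`; the optimal update is the multiple of `u` meeting the constraint
`δ p = q - w p`.
-/

open Matrix

namespace Matrix

variable {ι : Type*} [Fintype ι]

theorem IsSymm.dotProduct_mulVec_comm {R : Type*} [CommSemiring R] {H : Matrix ι ι R}
    (hH : H.IsSymm) (u v : ι → R) : u ⬝ᵥ (H *ᵥ v) = v ⬝ᵥ (H *ᵥ u) := by
  rw [dotProduct_mulVec, ← mulVec_transpose, hH.eq, dotProduct_comm]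

variable [DecidableEq ι]

theorem mulVec_col_nonsing_inv {R : Type*} [CommRing R] {H : Matrix ι ι R} (hH : IsUnit H.det)
    (p : ι) : H *ᵥ H⁻¹.col p = Pi.single p 1 := by
  rw [← mulVec_single_one, mulVec_mulVec, mul_nonsing_inv H hH, one_mulVec]

section

variable {H : Matrix ι ι ℝ} {u : ι → ℝ} {p : ι}

theorem dotProduct_mulVec_smul_self_of_mulVec_eq_single (hu : H *ᵥ u = Pi.single p 1) (c : ℝ) :
    (c • u) ⬝ᵥ (H *ᵥ (c • u)) = c ^ 2 * u p := by
  rw [mulVec_smul, hu, smul_dotProduct, dotProduct_smul, dotProduct_single_one, smul_eq_mul,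
    smul_eq_mul, sq, mul_assoc]

theorem PosSemidef.sq_apply_div_le_dotProduct_mulVec (hH : H.PosSemidef)
    (hu : H *ᵥ u = Pi.single p 1) (δ : ι → ℝ) : δ p ^ 2 / u p ≤ δ ⬝ᵥ (H *ᵥ δ) := by
  have hδu : δ ⬝ᵥ (H *ᵥ u) = δ p := by rw [hu, dotProduct_single_one]
  have huδ : u ⬝ᵥ (H *ᵥ δ) = δ p := by
    rw [(isHermitian_iff_isSymm.mp hH.isHermitian).dotProduct_mulVec_comm, hδu]
  have hnonneg (x : ι → ℝ) : 0 ≤ x ⬝ᵥ (H *ᵥ x) := by simpa using hH.dotProduct_mulVec_nonneg x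
  rcases eq_or_ne (u p) 0 with hup | hup
  · -- `x / 0 = 0` reduces this case to the nonnegativity of the form.
    simpa [hup] using hnonneg δ
  set c := δ p / u p with hc
  have hexpand : (δ - c • u) ⬝ᵥ (H *ᵥ (δ - c • u)) = δ ⬝ᵥ (H *ᵥ δ) - δ p ^ 2 / u p := by
    rw [mulVec_sub, sub_dotProduct, dotProduct_sub, dotProduct_sub,
      dotProduct_mulVec_smul_self_of_mulVec_eq_single hu, mulVec_smul, smul_dotProduct,
      dotProduct_smul, hδu, huδ, smul_eq_mul, hc]
    field_simp
    ring
  linarith [hnonneg (δ - c • u)]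

end

end Matrix

/-- The Optimal Brain Quantizer (OBQ) formula: for a symmetric positive definite
Hessian `H`, among all updates `δ` with `δ p = q - w p`, the quadratic form
`δᵀ H δ` is minimized with minimum value `(q - w p)² / (H⁻¹) p p`, attained at
`δ* = -(((w p) - q) / (H⁻¹) p p) • (H⁻¹ column p)`. -/
theorem obq_single_weight_quantization (n : ℕ) (H : Matrix (Fin n) (Fin n) ℝ)
    (hH : H.PosDef) (w : Fin n → ℝ) (p : Fin n) (q : ℝ) :
    (∀ δ : Fin n → ℝ, δ p = q - w p →
        (q - w p) ^ 2 / H⁻¹ p p ≤ δ ⬝ᵥ (H *ᵥ δ)) ∧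
      (-((w p - q) / H⁻¹ p p) • (fun i => H⁻¹ i p)) p = q - w p ∧
      (-((w p - q) / H⁻¹ p p) • (fun i => H⁻¹ i p)) ⬝ᵥ
          (H *ᵥ (-((w p - q) / H⁻¹ p p) • (fun i => H⁻¹ i p))) =
        (q - w p) ^ 2 / H⁻¹ p p := by
  have hu : H *ᵥ (fun i => H⁻¹ i p) = Pi.single p 1 :=
    mulVec_col_nonsing_inv ((isUnit_iff_isUnit_det H).mp hH.isUnit) p
  have hpp : H⁻¹ p p ≠ 0 := hH.inv.diag_pos.ne'
  refine ⟨fun δ hδ => hδ ▸ hH.posSemidef.sq_apply_div_le_dotProduct_mulVec hu δ, ?_, ?_⟩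
  · change -((w p - q) / H⁻¹ p p) * H⁻¹ p p = q - w p
    field_simp
    ring
  · rw [dotProduct_mulVec_smul_self_of_mulVec_eq_single hu]
    field_simp
    ring
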